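/- Let ω : [0,∞) → [0,∞) be a continuous strictly increasing function with ω(0) = 0 whose range contains [0,1], and let ω^{-1} denote its inverse function. Define Λ(t) = −∫_{1/t}^1 ln(ω^{-1}(s)) ds for t ≥ 1. Then for every t ∈ (0,1] one has Λ(1/t) = ∫_{ω^{-1}(t)}^{ω^{-1}(1)} (ω(s)/s) ds − ln ω^{-1}(1) + t ln ω^{-1}(t). -/

import Mathlib

/-!
Write `a = ωinv t`, `b = ωinv 1`. For `s ∈ (t, 1]` and `u ∈ (a, b]` one has `ω u ≤ s ↔ u ≤ ωinv s`,
so the region `{(s, u) | t < s ≤ 1, a < u ≤ b, ω u ≤ s}` is bounded by the graph of `ωinv` seen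
from the `s`-axis and by the graph of `ω` seen from the `u`-axis. Integrating `1 / u` over it in
both orders (Fubini) gives `∫ₜ¹ (ln ωinv s - ln a) ds = ∫ₐᵇ (1 - ω u) / u du`, which rearranges to
the claim.
-/

open MeasureTheory Set

section RightInverse

variable {α β : Type*} [LinearOrder α] [Preorder β] {f : α → β} {g : β → α} {s : Set α}
  {t : Set β}

theorem StrictMonoOn.le_iff_le_of_rightInvOn (hf : StrictMonoOn f s) (hg : MapsTo g t s)
    (hfg : RightInvOn g f t) {u : α} {y : β} (hu : u ∈ s) (hy : y ∈ t) :
    f u ≤ y ↔ u ≤ g y := by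
  conv_lhs => rw [← hfg hy]
  exact hf.le_iff_le hu (hg hy)

theorem StrictMonoOn.monotoneOn_of_rightInvOn (hf : StrictMonoOn f s) (hg : MapsTo g t s)
    (hfg : RightInvOn g f t) : MonotoneOn g t := fun _ hy _ hz hyz =>
  (hf.le_iff_le_of_rightInvOn hg hfg (hg hy) hz).1 ((hfg hy).trans_le hyz)

end RightInverse

theorem integrableOn_Ioc_inv {a b : ℝ} (ha : 0 < a) : IntegrableOn (fun u => u⁻¹) (Ioc a b) :=
  ((continuousOn_inv₀.mono fun _ hu => (ha.trans_le hu.1).ne').integrableOn_Icc).mono_set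
    Ioc_subset_Icc_self

theorem integral_Ioc_inv {a b : ℝ} (ha : 0 < a) (hab : a ≤ b) :
    ∫ u in Ioc a b, u⁻¹ = Real.log b - Real.log a := by
  rw [← intervalIntegral.integral_of_le hab, integral_inv_of_pos ha (ha.trans_le hab),
    Real.log_div (ha.trans_le hab).ne' ha.ne']

theorem integral_Ioc_integral_Ioc_swap {f g k : ℝ → ℝ} {a b c d : ℝ}
    (hf : Measurable f) (hk : IntegrableOn k (Ioc a b))
    (hgb : ∀ s ∈ Ioc c d, g s ≤ b) (hfc : ∀ u ∈ Ioc a b, c < f u)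
    (hfd : ∀ u ∈ Ioc a b, f u ≤ d)
    (hfg : ∀ s ∈ Ioc c d, ∀ u ∈ Ioc a b, f u ≤ s ↔ u ≤ g s) :
    ∫ s in Ioc c d, ∫ u in Ioc a (g s), k u = ∫ u in Ioc a b, (d - f u) * k u := by
  set S : Set (ℝ × ℝ) := {p | p.1 ∈ Ioc c d ∧ p.2 ∈ Ioc a b ∧ f p.2 ≤ p.1}
  have hS : MeasurableSet S :=
    (measurableSet_Ioc.preimage measurable_fst).inter
      ((measurableSet_Ioc.preimage measurable_snd).inter
        (measurableSet_le (hf.comp measurable_snd) measurable_fst))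
  have mem_S_left (s u : ℝ) : (s, u) ∈ S ↔ s ∈ Ioc c d ∧ u ∈ Ioc a (g s) := by
    refine ⟨fun ⟨hs, hu, hfu⟩ => ⟨hs, hu.1, (hfg s hs u hu).1 hfu⟩,
      fun ⟨hs, hu⟩ => ⟨hs, ⟨hu.1, hu.2.trans (hgb s hs)⟩, ?_⟩⟩
    exact (hfg s hs u ⟨hu.1, hu.2.trans (hgb s hs)⟩).2 hu.2
  have mem_S_right (s u : ℝ) : (s, u) ∈ S ↔ u ∈ Ioc a b ∧ s ∈ Icc (f u) d :=
    ⟨fun ⟨hs, hu, hfu⟩ => ⟨hu, hfu, hs.2⟩,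
      fun ⟨hu, hfu, hsd⟩ => ⟨⟨(hfc u hu).trans_le hfu, hsd⟩, hu, hfu⟩⟩
  set F : ℝ × ℝ → ℝ := S.indicator fun p => k p.2
  have hF : Integrable F (volume.prod volume) := by
    have hbox : IntegrableOn (fun p : ℝ × ℝ => k p.2) (Ioc c d ×ˢ Ioc a b) := by
      have := (integrableOn_const (μ := volume) (s := Ioc c d) (C := (1 : ℝ))
        measure_Ioc_lt_top.ne).mul_prod hk
      rw [Measure.prod_restrict] at this
      simpa [IntegrableOn, Measure.volume_eq_prod] using this
    exact (hbox.mono_set fun p hp => ⟨hp.1, hp.2.1⟩).integrable_indicator hS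
  have inner_left (s : ℝ) : ∫ u, F (s, u) =
      (Ioc c d).indicator (fun s => ∫ u in Ioc a (g s), k u) s := by
    by_cases hs : s ∈ Ioc c d
    · rw [indicator_of_mem hs, ← integral_indicator measurableSet_Ioc]
      congr 1 with u
      simp only [F, indicator_apply, mem_S_left, hs, true_and]
    · simp [F, mem_S_left, hs]
  have inner_right (u : ℝ) :
      ∫ s, F (s, u) = (Ioc a b).indicator (fun u => (d - f u) * k u) u := by
    by_cases hu : u ∈ Ioc a b
    · rw [indicator_of_mem hu, ← Real.volume_real_Icc_of_le (hfd u hu), ← smul_eq_mul,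
        ← integral_indicator_const _ measurableSet_Icc]
      congr 1 with s
      simp only [F, indicator_apply, mem_S_right, hu, true_and]
    · simp [F, mem_S_right, hu]
  calc ∫ s in Ioc c d, ∫ u in Ioc a (g s), k u
      = ∫ s, ∫ u, F (s, u) := by simp_rw [inner_left, integral_indicator measurableSet_Ioc]
    _ = ∫ u, ∫ s, F (s, u) := integral_integral_swap hF
    _ = ∫ u in Ioc a b, (d - f u) * k u := by
        simp_rw [inner_right, integral_indicator measurableSet_Ioc]

theorem integrableOn_Ioc_div_self_of_monotoneOn {ω : ℝ → ℝ} {a b : ℝ} (ha : 0 < a)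
    (hω : MonotoneOn ω (Icc a b)) : IntegrableOn (fun u => ω u / u) (Ioc a b) := by
  simp_rw [div_eq_mul_inv]
  exact ((hω.integrableOn_isCompact isCompact_Icc).mul_continuousOn
    (continuousOn_inv₀.mono fun _ hu => (ha.trans_le hu.1).ne') isCompact_Icc).mono_set
    Ioc_subset_Icc_self

section InverseFunction

variable {ω g : ℝ → ℝ} {c d : ℝ}

theorem integral_Ioc_log_sub_log_of_rightInvOn (hcd : c ≤ d) (hω : StrictMonoOn ω (Ioi 0))
    (hg : MapsTo g (Icc c d) (Ioi 0)) (hωg : RightInvOn g ω (Icc c d)) :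
    ∫ s in Ioc c d, (Real.log (g s) - Real.log (g c)) =
      ∫ u in Ioc (g c) (g d), (d - ω u) * u⁻¹ := by
  have hc : c ∈ Icc c d := left_mem_Icc.2 hcd
  have hd : d ∈ Icc c d := right_mem_Icc.2 hcd
  have ha : 0 < g c := hg hc
  have hmono := hω.monotoneOn_of_rightInvOn hg hωg
  have hle (u : ℝ) (hu : u ∈ Ioc (g c) (g d)) (s : ℝ) (hs : s ∈ Icc c d) :
      ω (max u (g c)) ≤ s ↔ u ≤ g s := by
    rw [max_eq_left hu.1.le]
    exact hω.le_iff_le_of_rightInvOn hg hωg (ha.trans hu.1) hs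
  -- `ω` is only monotone on `Ioi 0`; clamping below at `g c` makes it monotone, hence measurable
  have hfubini := integral_Ioc_integral_Ioc_swap (g := g) (k := fun u => u⁻¹)
    (Monotone.measurable fun x y hxy => hω.monotoneOn (ha.trans_le (le_max_right x _))
      (ha.trans_le (le_max_right y _)) (max_le_max hxy le_rfl))
    (integrableOn_Ioc_inv ha) (fun s hs => hmono (Ioc_subset_Icc_self hs) hd hs.2)
    (fun u hu => lt_of_not_ge fun h => hu.1.not_ge ((hle u hu c hc).1 h))
    (fun u hu => (hle u hu d hd).2 hu.2)
    (fun s hs u hu => hle u hu s (Ioc_subset_Icc_self hs))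
  rw [setIntegral_congr_fun measurableSet_Ioc fun s hs =>
    (integral_Ioc_inv ha (hmono hc (Ioc_subset_Icc_self hs) hs.1.le)).symm, hfubini]
  exact setIntegral_congr_fun measurableSet_Ioc fun u hu => by rw [max_eq_left hu.1.le]

theorem integral_Ioc_log_of_rightInvOn (hcd : c ≤ d) (hω : StrictMonoOn ω (Ioi 0))
    (hg : MapsTo g (Icc c d) (Ioi 0)) (hωg : RightInvOn g ω (Icc c d)) :
    ∫ s in Ioc c d, Real.log (g s) =
      d * Real.log (g d) - c * Real.log (g c) - ∫ u in Ioc (g c) (g d), ω u / u := by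
  have hc : c ∈ Icc c d := left_mem_Icc.2 hcd
  have hd : d ∈ Icc c d := right_mem_Icc.2 hcd
  have ha : 0 < g c := hg hc
  have hmono := hω.monotoneOn_of_rightInvOn hg hωg
  have hab : g c ≤ g d := hmono hc hd hcd
  have hlog : IntegrableOn (fun s => Real.log (g s)) (Ioc c d) :=
    (MonotoneOn.integrableOn_isCompact isCompact_Icc fun x hx y hy hxy =>
      Real.log_le_log (hg hx) (hmono hx hy hxy)).mono_set Ioc_subset_Icc_self
  have hωdiv := integrableOn_Ioc_div_self_of_monotoneOn (b := g d) ha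
    (hω.monotoneOn.mono fun u hu => ha.trans_le hu.1)
  have hlog_sub := integral_Ioc_log_sub_log_of_rightInvOn hcd hω hg hωg
  have hsplit (u : ℝ) : (d - ω u) * u⁻¹ = d * u⁻¹ - ω u / u := by ring
  simp_rw [hsplit] at hlog_sub
  rw [integral_sub hlog (integrableOn_const measure_Ioc_lt_top.ne), setIntegral_const,
    Real.volume_real_Ioc_of_le hcd, smul_eq_mul,
    integral_sub ((integrableOn_Ioc_inv ha).const_mul d) hωdiv, integral_const_mul,
    integral_Ioc_inv ha hab] at hlog_sub
  linarith

end InverseFunction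

theorem lambda_integration_by_parts_general
    (ω ωinv : ℝ → ℝ)
    (hωmono : StrictMonoOn ω (Ici 0))
    (hω0 : ω 0 = 0)
    (hinv₂ : ∀ s ∈ Icc (0 : ℝ) 1, ωinv s ∈ Ici (0 : ℝ) ∧ ω (ωinv s) = s) :
    ∀ t ∈ Ioc (0 : ℝ) 1,
      (-∫ s in Ioc t 1, Real.log (ωinv s)) =
        (∫ s in Ioc (ωinv t) (ωinv 1), ω s / s)
          - Real.log (ωinv 1) + t * Real.log (ωinv t) := by
  rintro t ⟨ht0, ht1⟩
  have hinv (s : ℝ) (hs : s ∈ Icc t 1) : 0 ≤ ωinv s ∧ ω (ωinv s) = s :=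
    hinv₂ s ⟨ht0.le.trans hs.1, hs.2⟩
  have hpos : MapsTo ωinv (Icc t 1) (Ioi 0) := fun s hs =>
    (hinv s hs).1.lt_of_ne' fun h => (ht0.trans_le hs.1).ne' <| by
      rw [← (hinv s hs).2, h, hω0]
  rw [integral_Ioc_log_of_rightInvOn ht1 (hωmono.mono Ioi_subset_Ici_self) hpos
    fun s hs => (hinv s hs).2]
  ring

/-- the integration-by-parts identity
Λ(1/t) = ∫_{ω⁻¹(t)}^{ω⁻¹(1)} ω(s)/s ds − ln ω⁻¹(1) + t ln ω⁻¹(t), where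
Λ(T) = −∫_{1/T}^1 ln(ω⁻¹(s)) ds, for a continuous strictly increasing ω with ω(0)=0
whose range contains [0,1]. -/
theorem lambda_integration_by_parts
    (ω ωinv : ℝ → ℝ)
    (hωc : ContinuousOn ω (Ici 0))
    (hωmono : StrictMonoOn ω (Ici 0))
    (hω0 : ω 0 = 0)
    (hrange : Icc (0 : ℝ) 1 ⊆ ω '' Ici 0)
    (hinv₁ : ∀ t ∈ Ici (0 : ℝ), ω t ∈ Icc (0 : ℝ) 1 → ωinv (ω t) = t)
    (hinv₂ : ∀ s ∈ Icc (0 : ℝ) 1, ωinv s ∈ Ici (0 : ℝ) ∧ ω (ωinv s) = s) :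
    ∀ t ∈ Ioc (0 : ℝ) 1,
      (-∫ s in Ioc t 1, Real.log (ωinv s)) =
        (∫ s in Ioc (ωinv t) (ωinv 1), ω s / s)
          - Real.log (ωinv 1) + t * Real.log (ωinv t) :=
  lambda_integration_by_parts_general ω ωinv hωmono hω0 hinv₂
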